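/- Let X be a real normed linear space. Then DW_B(X) = sup{ 2‖u+v‖ / ‖u+v+δ(u−v)‖ : u, v ∈ S_X, u ⊥_B v, −1 < δ < 1 }. -/

import Mathlib

/-!
Write a pair of nonzero vectors as `x = s • u`, `y = -(t • v)` with `‖u‖ = ‖v‖ = 1` and `s, t > 0`.
Then `x - y = ((s + t) / 2) • (u + v + δ • (u - v))` with `δ = (s - t) / (s + t) ∈ (-1, 1)`, so the
Dunkl–Williams quotient of `(x, y)` is `2‖u + v‖ / ‖u + v + δ • (u - v)‖`. Conversely every
`δ ∈ (-1, 1)` arises from `s = 1 + δ`, `t = 1 - δ`. Since Birkhoff orthogonality survives scaling each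
vector separately, the two sets of quotients coincide, not only their suprema.
-/

def BirkhoffOrthogonal {X : Type*} [SeminormedAddCommGroup X] [NormedSpace ℝ X] (x y : X) :
    Prop :=
  ∀ l : ℝ, ‖x‖ ≤ ‖x + l • y‖

noncomputable def dunklWilliamsRatio {X : Type*} [SeminormedAddCommGroup X] [NormedSpace ℝ X]
    (x y : X) : ℝ :=
  (‖x‖ + ‖y‖) / ‖x - y‖ * ‖‖x‖⁻¹ • x - ‖y‖⁻¹ • y‖

section

variable {X : Type*} [SeminormedAddCommGroup X] [NormedSpace ℝ X]

theorem BirkhoffOrthogonal.smul_smul {x y : X} (h : BirkhoffOrthogonal x y) (a b : ℝ) :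
    BirkhoffOrthogonal (a • x) (b • y) := by
  intro l
  rcases eq_or_ne a 0 with rfl | ha
  · simp
  have hvec : a • x + l • b • y = a • (x + (l * b / a) • y) := by
    match_scalars <;> field_simp
  rw [hvec, norm_smul, norm_smul]
  exact mul_le_mul_of_nonneg_left (h _) (norm_nonneg a)

theorem neg_one_lt_sub_div_add {s t : ℝ} (hs : 0 < s) (ht : 0 < t) : -1 < (s - t) / (s + t) := by
  rw [lt_div_iff₀ (by positivity)]
  linarith

theorem sub_div_add_lt_one {s t : ℝ} (hs : 0 < s) (ht : 0 < t) : (s - t) / (s + t) < 1 := by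
  rw [div_lt_one (by positivity)]
  linarith

theorem dunklWilliamsRatio_smul_neg_smul {u v : X} {s t : ℝ} (hu : ‖u‖ = 1) (hv : ‖v‖ = 1)
    (hs : 0 < s) (ht : 0 < t) :
    dunklWilliamsRatio (s • u) (-(t • v)) =
      2 * ‖u + v‖ / ‖u + v + ((s - t) / (s + t)) • (u - v)‖ := by
  have hsu : ‖s • u‖ = s := by rw [norm_smul, hu, mul_one, Real.norm_of_nonneg hs.le]
  have htv : ‖-(t • v)‖ = t := by
    rw [norm_neg, norm_smul, hv, mul_one, Real.norm_of_nonneg ht.le]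
  have hunit : s⁻¹ • s • u - t⁻¹ • -(t • v) = u + v := by
    rw [smul_neg, inv_smul_smul₀ hs.ne', inv_smul_smul₀ ht.ne', sub_neg_eq_add]
  have hdiff : s • u - -(t • v) = ((s + t) / 2) • (u + v + ((s - t) / (s + t)) • (u - v)) := by
    match_scalars <;> field_simp <;> ring
  rw [dunklWilliamsRatio, hsu, htv, hunit, hdiff, norm_smul,
    Real.norm_of_nonneg (by positivity : 0 ≤ (s + t) / 2)]
  rcases eq_or_ne ‖u + v + ((s - t) / (s + t)) • (u - v)‖ 0 with h | h
  · simp [h]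
  · field_simp

end

/-- `DW_B(X) = sup { 2‖u+v‖ / ‖u+v+δ(u−v)‖ : u, v ∈ S_X, u ⊥_B v, −1 < δ < 1 }`,
where `x ⊥_B y` means `‖x + λy‖ ≥ ‖x‖` for all real `λ`. -/
theorem dunkl_williams_birkhoff_eq_DWB4 {X : Type*} [NormedAddCommGroup X]
    [NormedSpace ℝ X] :
    sSup {c : ℝ | ∃ x y : X, x ≠ 0 ∧ y ≠ 0 ∧ (∀ l : ℝ, ‖x‖ ≤ ‖x + l • y‖) ∧
      c = (‖x‖ + ‖y‖) / ‖x - y‖ * ‖‖x‖⁻¹ • x - ‖y‖⁻¹ • y‖} =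
    sSup {c : ℝ | ∃ u v : X, ∃ δ : ℝ, ‖u‖ = 1 ∧ ‖v‖ = 1 ∧
      (∀ l : ℝ, ‖u‖ ≤ ‖u + l • v‖) ∧ -1 < δ ∧ δ < 1 ∧
      c = 2 * ‖u + v‖ / ‖u + v + δ • (u - v)‖} := by
  congr 1
  ext c
  constructor
  · rintro ⟨x, y, hx, hy, horth, rfl⟩
    have hs : 0 < ‖x‖ := norm_pos_iff.2 hx
    have ht : 0 < ‖y‖ := norm_pos_iff.2 hy
    have hu : ‖‖x‖⁻¹ • x‖ = 1 := norm_smul_inv_norm hx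
    have hv : ‖-(‖y‖⁻¹ • y)‖ = 1 := by
      rw [norm_neg]
      exact norm_smul_inv_norm hy
    have horth' := BirkhoffOrthogonal.smul_smul horth ‖x‖⁻¹ (-‖y‖⁻¹)
    rw [neg_smul] at horth'
    refine ⟨_, _, _, hu, hv, horth', neg_one_lt_sub_div_add hs ht, sub_div_add_lt_one hs ht, ?_⟩
    rw [← dunklWilliamsRatio_smul_neg_smul hu hv hs ht, smul_inv_smul₀ hs.ne', smul_neg,
      smul_inv_smul₀ ht.ne', neg_neg]
    rfl
  · rintro ⟨u, v, δ, hu, hv, horth, hδ₁, hδ₂, rfl⟩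
    have hs : 0 < 1 + δ := by linarith
    have ht : 0 < 1 - δ := by linarith
    have hu₀ : u ≠ 0 := norm_ne_zero_iff.1 (by simp [hu])
    have hv₀ : v ≠ 0 := norm_ne_zero_iff.1 (by simp [hv])
    have horth' := BirkhoffOrthogonal.smul_smul horth (1 + δ) (-(1 - δ))
    rw [neg_smul] at horth'
    have hratio := dunklWilliamsRatio_smul_neg_smul hu hv hs ht
    rw [show (1 + δ - (1 - δ)) / (1 + δ + (1 - δ)) = δ by field_simp; ring] at hratio
    exact ⟨_, _, smul_ne_zero hs.ne' hu₀, neg_ne_zero.2 (smul_ne_zero ht.ne' hv₀), horth',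
      hratio.symm⟩
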